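/- Let X : [0,T] → ℝ^d be a C^1 path, let Q ≥ 1, and for each 1 ≤ l ≤ Q let Z^{(l)} : [0,T] → L((ℝ^d)^{⊗l}, ℝ^e) be a function. For a partition P = {s = t_0 < t_1 < ⋯ < t_n = t} define Γ(P) := Σ_{i=0}^{n−1} Σ_{l=1}^{Q} (Z^{(l)}_{t_i} − Σ_{l_1=0}^{Q−l} Z^{(l+l_1)}_{s}(X^{l_1}_{s,t_i} ⊗ ·))(X^{l}_{t_i,t_{i+1}}). Then for every partition P with n ≥ 2 and every interior point t_j (1 ≤ j ≤ n−1), Γ(P) − Γ(P∖{t_j}) = Σ_{l=1}^{Q} (Z^{(l)}_{t_j} − Σ_{l_1=0}^{Q−l} Z^{(l+l_1)}_{t_{j−1}}(X^{l_1}_{t_{j−1},t_j} ⊗ ·))(X^{l}_{t_j,t_{j+1}}). -/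

import Mathlib

open MeasureTheory

noncomputable section

/-- The `k`-th tensor power of `ℝ^d`, identified with `ℝ^(d^k)` with the Euclidean norm. -/
abbrev Tpow (d k : ℕ) : Type := EuclideanSpace ℝ (Fin k → Fin d)

/-- Tensor product of tensor-power vectors. -/
def tmul {d k l : ℕ} (v : Tpow d k) (w : Tpow d l) : Tpow d (k + l) :=
  WithLp.toLp 2 (fun i => v (fun j => i (Fin.castAdd l j)) * w (fun j => i (Fin.natAdd k j)))

/-- Reindexing cast between tensor powers of equal order. -/
def tcast {d k l : ℕ} (h : k = l) (v : Tpow d k) : Tpow d l :=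
  WithLp.toLp 2 (fun i => v (fun j => i (Fin.cast h j)))

/-- Tensor product `a ⊗ w` of a vector of `ℝ^d` with a `k`-tensor. -/
def consT {d k : ℕ} (a : EuclideanSpace ℝ (Fin d)) (w : Tpow d k) : Tpow d (k + 1) :=
  WithLp.toLp 2 (fun i => a (i 0) * w (fun j => i j.succ))

/-- Iterated integrals `X^k_{s,t} = ∫_{s<s₁<⋯<s_k<t} X'(s₁) ⊗ ⋯ ⊗ X'(s_k) ds₁⋯ds_k`
of a C¹ path, defined recursively: `X^{k+1}_{s,t} = ∫_s^t X^k_{s,u} ⊗ X'(u) du`. -/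
def iterInt {d : ℕ} (X : ℝ → EuclideanSpace ℝ (Fin d)) : (k : ℕ) → ℝ → ℝ → Tpow d k
  | 0, _, _ => WithLp.toLp 2 (fun _ => 1)
  | (k+1), s, t => WithLp.toLp 2 (fun i =>
      ∫ u in s..t, iterInt X k s u (fun j => i j.castSucc) * deriv X u (i (Fin.last k)))

/-- `B(w ⊗ ·)` : partial application of a linear map on `(a+b)`-tensors to a left factor `w`. -/
def leftPair {d e a b c : ℕ} (h : a + b = c)
    (B : Tpow d c →L[ℝ] EuclideanSpace ℝ (Fin e)) (w : Tpow d a) :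
    Tpow d b →L[ℝ] EuclideanSpace ℝ (Fin e) :=
  LinearMap.toContinuousLinearMap
    { toFun := fun v => B (tcast h (tmul w v))
      map_add' := fun v v' => by
        show B (tcast h (tmul w (v + v'))) = B (tcast h (tmul w v)) + B (tcast h (tmul w v'))
        have h1 : tcast h (tmul w (v + v')) = tcast h (tmul w v) + tcast h (tmul w v') :=
          PiLp.ext fun i => by simp [tcast, tmul, PiLp.add_apply, mul_add]
        rw [h1, map_add]
      map_smul' := fun c v => by
        show B (tcast h (tmul w (c • v))) = c • B (tcast h (tmul w v))
        have h1 : tcast h (tmul w (c • v)) = c • tcast h (tmul w v) :=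
          PiLp.ext fun i => by
            simp only [tcast, tmul, PiLp.smul_apply, smul_eq_mul, PiLp.toLp_apply]
            ring
        rw [h1, _root_.map_smul] }

/-- The Riemann-sum functional of a partition `s = τ 0 < τ 1 < ⋯ < τ n = t`:
`Γ(P) = Σ_{i=0}^{n−1} Σ_{l=1}^{Q} (Z^{(l)}_{t_i} − Σ_{l₁=0}^{Q−l} Z^{(l+l₁)}_s(X^{l₁}_{s,t_i} ⊗ ·))
(X^{l}_{t_i,t_{i+1}})`. -/
def riemannGamma {d e : ℕ} (X : ℝ → EuclideanSpace ℝ (Fin d)) (Q : ℕ)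
    (Z : (l : ℕ) → ℝ → (Tpow d l →L[ℝ] EuclideanSpace ℝ (Fin e)))
    (s : ℝ) (n : ℕ) (τ : ℕ → ℝ) : EuclideanSpace ℝ (Fin e) :=
  ∑ i ∈ Finset.range n, ∑ l ∈ Finset.Icc 1 Q,
    (Z l (τ i) - ∑ l₁ ∈ Finset.range (Q - l + 1),
        leftPair (Nat.add_comm l₁ l) (Z (l + l₁) s) (iterInt X l₁ s (τ i)))
      (iterInt X l (τ i) (τ (i + 1)))

namespace RSPR

variable {d : ℕ} (X : ℝ → EuclideanSpace ℝ (Fin d))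

/-- scalar iterated integrals along a stream of coordinates -/
def Ifn : ℕ → (ℕ → Fin d) → ℝ → ℝ → ℝ
  | 0, _, _, _ => 1
  | (m+1), i, s, t => ∫ r in s..t, Ifn m i s r * deriv X r (i m)

def shift (k : ℕ) (i : ℕ → Fin d) : ℕ → Fin d := fun q => i (k + q)

lemma Ifn_succ (m : ℕ) (i : ℕ → Fin d) (s t : ℝ) :
    Ifn X (m+1) i s t = ∫ r in s..t, Ifn X m i s r * deriv X r (i m) := rfl

variable {X}

lemma Ifn_cont (hX : ContDiff ℝ 1 X) : ∀ (m : ℕ) (i : ℕ → Fin d) (s : ℝ),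
    Continuous (fun t => Ifn X m i s t)
  | 0, _, _ => continuous_const
  | (m+1), i, s => by
    have hc : Continuous (fun r => Ifn X m i s r * deriv X r (i m)) :=
      (Ifn_cont hX m i s).mul ((PiLp.continuous_apply (p := 2) (β := fun _ : Fin d => ℝ) (i m)).comp (hX.continuous_deriv le_rfl))
    exact intervalIntegral.continuous_primitive (fun a b => hc.intervalIntegrable a b) s

lemma Ifn_intble (hX : ContDiff ℝ 1 X) (m : ℕ) (i : ℕ → Fin d) (s : ℝ) (c : Fin d) (a b : ℝ) :
    IntervalIntegrable (fun r => Ifn X m i s r * deriv X r c) volume a b :=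
  ((Ifn_cont hX m i s).mul ((PiLp.continuous_apply (p := 2) (β := fun _ : Fin d => ℝ) c).comp (hX.continuous_deriv le_rfl))).intervalIntegrable a b

lemma chenI (hX : ContDiff ℝ 1 X) (s u : ℝ) :
    ∀ (m : ℕ) (i : ℕ → Fin d) (t : ℝ),
    Ifn X m i s t = ∑ k ∈ Finset.range (m+1), Ifn X k i s u * Ifn X (m-k) (shift k i) u t := by
  intro m
  induction m with
  | zero => intro i t; simp [Ifn]
  | succ m IH =>
    intro i t
    have split : Ifn X (m+1) i s t = Ifn X (m+1) i s u
        + ∫ r in u..t, Ifn X m i s r * deriv X r (i m) := by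
      show (∫ r in s..t, Ifn X m i s r * deriv X r (i m)) = _
      rw [← intervalIntegral.integral_add_adjacent_intervals (Ifn_intble hX m i s (i m) s u)
        (Ifn_intble hX m i s (i m) u t)]
      rfl
    have expand : (∫ r in u..t, Ifn X m i s r * deriv X r (i m))
        = ∑ k ∈ Finset.range (m+1), Ifn X k i s u * Ifn X (m-k+1) (shift k i) u t := by
      have h1 : ∀ r : ℝ, Ifn X m i s r * deriv X r (i m)
          = ∑ k ∈ Finset.range (m+1),
              Ifn X k i s u * (Ifn X (m-k) (shift k i) u r * deriv X r (i m)) := by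
        intro r
        rw [IH i r, Finset.sum_mul]
        exact Finset.sum_congr rfl (fun k _ => by ring)
      rw [intervalIntegral.integral_congr (fun r _ => h1 r)]
      rw [intervalIntegral.integral_finset_sum]
      · refine Finset.sum_congr rfl (fun k hk => ?_)
        rw [intervalIntegral.integral_const_mul]
        congr 1
        rw [Ifn_succ X]
        have : shift k i (m - k) = i m := by
          simp only [shift]
          congr 1
          have := Finset.mem_range.mp hk
          omega
        rw [this]
      · intro k _
        exact (Ifn_intble hX (m-k) (shift k i) u (i m) u t).const_mul _
    rw [split, expand, Finset.sum_range_succ (fun k => Ifn X k i s u * Ifn X (m+1-k) (shift k i) u t)]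
    have last : Ifn X (m+1) i s u * Ifn X (m+1-(m+1)) (shift (m+1) i) u t = Ifn X (m+1) i s u := by
      simp [Ifn]
    rw [last, add_comm]
    congr 1
    refine Finset.sum_congr rfl (fun k hk => ?_)
    have : m + 1 - k = (m - k) + 1 := by have := Finset.mem_range.mp hk; omega
    rw [this]

lemma shift_shift (p r : ℕ) (i : ℕ → Fin d) : shift p (shift r i) = shift (r + p) i := by
  funext q; simp only [shift]; congr 1; omega

lemma S1 (hX : ContDiff ℝ 1 X) (a b c : ℝ) (m : ℕ) (i : ℕ → Fin d) :
    Ifn X m i a c = Ifn X m i a b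
      + ∑ l ∈ Finset.Icc 1 m, Ifn X (m-l) i a b * Ifn X l (shift (m-l) i) b c := by
  rw [chenI hX a b m i c, Finset.sum_range_succ]
  have h0 : Ifn X m i a b * Ifn X (m-m) (shift m i) b c = Ifn X m i a b := by
    have : m - m = 0 := by omega
    rw [this]; simp [Ifn]
  rw [h0, add_comm]
  congr 1
  refine Finset.sum_nbij' (fun k => m - k) (fun l => m - l) ?_ ?_ ?_ ?_ ?_
  · intro k hk; simp only [Finset.mem_range] at hk; simp only [Finset.mem_Icc]; omega
  · intro l hl; simp only [Finset.mem_Icc] at hl; simp only [Finset.mem_range]; omega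
  · intro k hk; simp only [Finset.mem_range] at hk; show m - (m - k) = k; omega
  · intro l hl; simp only [Finset.mem_Icc] at hl; show m - (m - l) = l; omega
  · intro k hk
    simp only [Finset.mem_range] at hk
    have h1 : m - (m - k) = k := by omega
    rw [h1]

lemma triangle_swap {M : Type*} [AddCommMonoid M] (m : ℕ) (f : ℕ → ℕ → M) :
    ∑ l ∈ Finset.Icc 1 m, ∑ q ∈ Finset.Icc 1 l, f l q
      = ∑ q ∈ Finset.Icc 1 m, ∑ l ∈ Finset.Icc q m, f l q := by
  rw [Finset.sum_sigma', Finset.sum_sigma']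
  refine Finset.sum_nbij' (fun p => ⟨p.2, p.1⟩) (fun p => ⟨p.2, p.1⟩) ?_ ?_ ?_ ?_ ?_ <;>
    simp only [Finset.mem_sigma, Finset.mem_Icc] <;> intros <;> simp_all <;> omega

lemma S2 (hX : ContDiff ℝ 1 X) (s a b c : ℝ) (m : ℕ) (i : ℕ → Fin d) :
    ∑ l ∈ Finset.Icc 1 m, Ifn X (m-l) i s a * Ifn X l (shift (m-l) i) a c
      = (∑ l ∈ Finset.Icc 1 m, Ifn X (m-l) i s a * Ifn X l (shift (m-l) i) a b)
        + ∑ l ∈ Finset.Icc 1 m, Ifn X (m-l) i s b * Ifn X l (shift (m-l) i) b c := by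
  have step1 : ∀ l ∈ Finset.Icc 1 m,
      Ifn X (m-l) i s a * Ifn X l (shift (m-l) i) a c
        = Ifn X (m-l) i s a * Ifn X l (shift (m-l) i) a b
          + ∑ q ∈ Finset.Icc 1 l,
              Ifn X (m-l) i s a * Ifn X (l-q) (shift (m-l) i) a b
                * Ifn X q (shift (m-q) i) b c := by
    intro l hl
    simp only [Finset.mem_Icc] at hl
    rw [S1 hX a b c l (shift (m-l) i), mul_add, Finset.mul_sum]
    congr 1
    refine Finset.sum_congr rfl (fun q hq => ?_)
    simp only [Finset.mem_Icc] at hq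
    have h2 : (m - l) + (l - q) = m - q := by omega
    rw [shift_shift, h2, mul_assoc]
  rw [Finset.sum_congr rfl step1, Finset.sum_add_distrib]
  congr 1
  rw [triangle_swap m (fun l q => Ifn X (m-l) i s a * Ifn X (l-q) (shift (m-l) i) a b
    * Ifn X q (shift (m-q) i) b c)]
  refine Finset.sum_congr rfl (fun q hq => ?_)
  simp only [Finset.mem_Icc] at hq
  rw [← Finset.sum_mul]
  congr 1
  rw [chenI hX s a (m-q) i b]
  refine Finset.sum_nbij' (fun l => m - l) (fun k => m - k) ?_ ?_ ?_ ?_ ?_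
  · intro l hl; simp only [Finset.mem_Icc] at hl; simp only [Finset.mem_range]; omega
  · intro k hk; simp only [Finset.mem_range] at hk; simp only [Finset.mem_Icc]; omega
  · intro l hl; simp only [Finset.mem_Icc] at hl; show m - (m - l) = l; omega
  · intro k hk; simp only [Finset.mem_range] at hk; show m - (m - k) = k; omega
  · intro l hl
    simp only [Finset.mem_Icc] at hl
    have h1 : m - q - (m - l) = l - q := by omega
    rw [h1]

lemma tcast_rfl {k : ℕ} (v : Tpow d k) : tcast rfl v = v := rfl

lemma iterInt_eq_Ifn (k : ℕ) : ∀ (ι : Fin k → Fin d) (i : ℕ → Fin d),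
    (∀ j : Fin k, i j.1 = ι j) → ∀ s t : ℝ, iterInt X k s t ι = Ifn X k i s t := by
  induction k with
  | zero => intros; rfl
  | succ k IH =>
    intro ι i hi s t
    show (∫ r in s..t, iterInt X k s r (fun j => ι j.castSucc) * deriv X r (ι (Fin.last k))) = _
    rw [Ifn_succ]
    have h1 : (fun r => iterInt X k s r (fun j => ι j.castSucc) * deriv X r (ι (Fin.last k)))
        = (fun r => Ifn X k i s r * deriv X r (i k)) := by
      funext r
      rw [IH (fun j => ι j.castSucc) i (fun j => hi j.castSucc)]
      rw [show ι (Fin.last k) = i k from (hi (Fin.last k)).symm]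
    rw [h1]

lemma T1 (hX : ContDiff ℝ 1 X) (a b c : ℝ) (m : ℕ) :
    iterInt X m a c = iterInt X m a b
      + ∑ l ∈ (Finset.Icc 1 m).attach,
          tcast (show (m - l.1) + l.1 = m by
              have := l.2; simp only [Finset.mem_Icc] at this; omega)
            (tmul (iterInt X (m - l.1) a b) (iterInt X l.1 b c)) := by
  rcases Nat.eq_zero_or_pos m with hm | hm
  · subst hm
    have hz : (∑ l ∈ (Finset.Icc 1 0).attach,
        tcast (show (0 - l.1) + l.1 = 0 by
            have := l.2; simp only [Finset.mem_Icc] at this; omega)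
          (tmul (iterInt X (0 - l.1) a b) (iterInt X l.1 b c))) = 0 :=
      Finset.sum_eq_zero (fun l _ => by have := l.2; simp only [Finset.mem_Icc] at this; omega)
    rw [hz, add_zero]
    rfl
  · refine PiLp.ext fun ι => ?_
    have hι0 : ∀ q : ℕ, min q (m-1) < m := fun q => by omega
    set i : ℕ → Fin d := fun q => ι ⟨min q (m-1), hι0 q⟩ with hidef
    have hι : ∀ j : Fin m, i j.1 = ι j := by
      intro j
      simp only [hidef]
      exact congrArg ι (Fin.ext (by simp only []; omega))
    rw [PiLp.add_apply]
    show iterInt X m a c ι = iterInt X m a b ι + _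
    rw [WithLp.ofLp_sum, Finset.sum_apply, iterInt_eq_Ifn m ι i hι a c, iterInt_eq_Ifn m ι i hι a b]
    have hterm : ∀ l ∈ (Finset.Icc 1 m).attach,
        (tcast (show (m - l.1) + l.1 = m by
              have := l.2; simp only [Finset.mem_Icc] at this; omega)
            (tmul (iterInt X (m - l.1) a b) (iterInt X l.1 b c))) ι
          = Ifn X (m - l.1) i a b * Ifn X l.1 (shift (m - l.1) i) b c := by
      rintro ⟨l, hl⟩ -
      simp only [Finset.mem_Icc] at hl
      have pf : (m - l) + l = m := by omega
      have h1 : iterInt X (m - l) a b (fun j => ι (Fin.cast pf (Fin.castAdd l j)))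
          = Ifn X (m - l) i a b := by
        refine iterInt_eq_Ifn (m - l) _ i (fun j => ?_) a b
        exact congrArg ι (Fin.ext (by simp only [Fin.coe_cast, Fin.coe_castAdd]; omega))
      have h2 : iterInt X l b c (fun j => ι (Fin.cast pf (Fin.natAdd (m - l) j)))
          = Ifn X l (shift (m - l) i) b c := by
        refine iterInt_eq_Ifn l _ (shift (m - l) i) (fun j => ?_) b c
        refine congrArg ι (Fin.ext ?_)
        simp only [shift, hidef, Fin.coe_cast, Fin.coe_natAdd]
        omega
      exact congrArg₂ (· * ·) h1 h2
    rw [Finset.sum_congr rfl hterm]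
    rw [Finset.sum_attach (Finset.Icc 1 m)
      (fun l => Ifn X (m - l) i a b * Ifn X l (shift (m - l) i) b c)]
    exact S1 hX a b c m i

lemma eval_term (u v w : ℝ) (m l : ℕ) (pf : (m - l) + l = m)
    (ι : Fin m → Fin d) (i : ℕ → Fin d) (hι : ∀ j : Fin m, i j.1 = ι j) :
    (tcast pf (tmul (iterInt X (m - l) u v) (iterInt X l v w))) ι
      = Ifn X (m - l) i u v * Ifn X l (shift (m - l) i) v w :=
  congrArg₂ (· * ·)
    (iterInt_eq_Ifn (m - l) _ i (fun j => hι (Fin.cast pf (Fin.castAdd l j))) u v)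
    (iterInt_eq_Ifn l _ (shift (m - l) i) (fun j => hι (Fin.cast pf (Fin.natAdd (m - l) j))) v w)

lemma T2 (hX : ContDiff ℝ 1 X) (s a b c : ℝ) (m : ℕ) :
    (∑ l ∈ (Finset.Icc 1 m).attach,
        tcast (show (m - l.1) + l.1 = m by
            have := l.2; simp only [Finset.mem_Icc] at this; omega)
          (tmul (iterInt X (m - l.1) s a) (iterInt X l.1 a c)))
      = (∑ l ∈ (Finset.Icc 1 m).attach,
          tcast (show (m - l.1) + l.1 = m by
              have := l.2; simp only [Finset.mem_Icc] at this; omega)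
            (tmul (iterInt X (m - l.1) s a) (iterInt X l.1 a b)))
        + ∑ l ∈ (Finset.Icc 1 m).attach,
            tcast (show (m - l.1) + l.1 = m by
                have := l.2; simp only [Finset.mem_Icc] at this; omega)
              (tmul (iterInt X (m - l.1) s b) (iterInt X l.1 b c)) := by
  rcases Nat.eq_zero_or_pos m with hm | hm
  · subst hm
    have hz : ∀ (f : {x // x ∈ Finset.Icc 1 0} → Tpow d 0),
        (∑ l ∈ (Finset.Icc 1 0).attach, f l) = 0 :=
      fun f => Finset.sum_eq_zero (fun l _ => by
        have := l.2; simp only [Finset.mem_Icc] at this; omega)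
    rw [hz, hz, hz, add_zero]
  · refine PiLp.ext fun ι => ?_
    have hι0 : ∀ q : ℕ, min q (m-1) < m := fun q => by omega
    set i : ℕ → Fin d := fun q => ι ⟨min q (m-1), hι0 q⟩ with hidef
    have hι : ∀ j : Fin m, i j.1 = ι j := by
      intro j
      simp only [hidef]
      exact congrArg ι (Fin.ext (by simp only []; omega))
    rw [PiLp.add_apply, WithLp.ofLp_sum, Finset.sum_apply, WithLp.ofLp_sum, Finset.sum_apply, WithLp.ofLp_sum, Finset.sum_apply]
    have hterm : ∀ (u v w : ℝ) (l : {x // x ∈ Finset.Icc 1 m})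
        (pf : (m - l.1) + l.1 = m),
        (tcast pf (tmul (iterInt X (m - l.1) u v) (iterInt X l.1 v w))) ι
          = Ifn X (m - l.1) i u v * Ifn X l.1 (shift (m - l.1) i) v w :=
      fun u v w l pf => eval_term u v w m l.1 pf ι i hι
    rw [Finset.sum_congr rfl (fun l _ => hterm s a c l _),
        Finset.sum_congr rfl (fun l _ => hterm s a b l _),
        Finset.sum_congr rfl (fun l _ => hterm s b c l _),
        Finset.sum_attach (Finset.Icc 1 m)
          (fun l => Ifn X (m - l) i s a * Ifn X l (shift (m - l) i) a c),
        Finset.sum_attach (Finset.Icc 1 m)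
          (fun l => Ifn X (m - l) i s a * Ifn X l (shift (m - l) i) a b),
        Finset.sum_attach (Finset.Icc 1 m)
          (fun l => Ifn X (m - l) i s b * Ifn X l (shift (m - l) i) b c)]
    exact S2 hX s a b c m i

variable {e : ℕ}

lemma Z_tcast (Z : (l : ℕ) → ℝ → (Tpow d l →L[ℝ] EuclideanSpace ℝ (Fin e)))
    {k k' : ℕ} (h : k = k') (r : ℝ) (w : Tpow d k) :
    Z k' r (tcast h w) = Z k r w := by subst h; rfl

lemma reindexQ {M : Type*} [AddCommMonoid M] (Q : ℕ) (g : ℕ → ℕ → M) :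
    ∑ l ∈ Finset.Icc 1 Q, ∑ l1 ∈ Finset.range (Q - l + 1), g l1 l
      = ∑ m ∈ Finset.Icc 1 Q, ∑ l ∈ Finset.Icc 1 m, g (m - l) l := by
  rw [Finset.sum_sigma', Finset.sum_sigma']
  refine Finset.sum_nbij' (fun p => ⟨p.2 + p.1, p.1⟩) (fun p => ⟨p.2, p.1 - p.2⟩)
    ?_ ?_ ?_ ?_ ?_
  · rintro ⟨l, l1⟩ h
    simp only [Finset.mem_sigma, Finset.mem_Icc, Finset.mem_range] at h ⊢
    omega
  · rintro ⟨m, l⟩ h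
    simp only [Finset.mem_sigma, Finset.mem_Icc, Finset.mem_range] at h ⊢
    omega
  · rintro ⟨l, l1⟩ h
    simp only [Finset.mem_sigma, Finset.mem_Icc, Finset.mem_range] at h
    simp only [Nat.add_sub_cancel]
  · rintro ⟨m, l⟩ h
    simp only [Finset.mem_sigma, Finset.mem_Icc, Finset.mem_range] at h
    simp only []
    congr 1
    omega
  · rintro ⟨l, l1⟩ h
    simp only [Finset.mem_sigma, Finset.mem_Icc, Finset.mem_range] at h
    simp only [Nat.add_sub_cancel]

variable (Z : (l : ℕ) → ℝ → (Tpow d l →L[ℝ] EuclideanSpace ℝ (Fin e))) (Q : ℕ)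

lemma E1 (hX : ContDiff ℝ 1 X) (a b c : ℝ) :
    (∑ m ∈ Finset.Icc 1 Q, Z m a (iterInt X m a c))
      = (∑ m ∈ Finset.Icc 1 Q, Z m a (iterInt X m a b))
        + ∑ l ∈ Finset.Icc 1 Q, ∑ l1 ∈ Finset.range (Q - l + 1),
            Z (l + l1) a (tcast (Nat.add_comm l1 l)
              (tmul (iterInt X l1 a b) (iterInt X l b c))) := by
  have conv1 : (∑ l ∈ Finset.Icc 1 Q, ∑ l1 ∈ Finset.range (Q - l + 1),
      Z (l + l1) a (tcast (Nat.add_comm l1 l)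
        (tmul (iterInt X l1 a b) (iterInt X l b c))))
      = ∑ l ∈ Finset.Icc 1 Q, ∑ l1 ∈ Finset.range (Q - l + 1),
          Z (l1 + l) a (tmul (iterInt X l1 a b) (iterInt X l b c)) :=
    Finset.sum_congr rfl (fun l _ => Finset.sum_congr rfl (fun l1 _ =>
      Z_tcast Z (Nat.add_comm l1 l) a _))
  have conv2 : (∑ l ∈ Finset.Icc 1 Q, ∑ l1 ∈ Finset.range (Q - l + 1),
      Z (l1 + l) a (tmul (iterInt X l1 a b) (iterInt X l b c)))
      = ∑ m ∈ Finset.Icc 1 Q, ∑ l ∈ Finset.Icc 1 m,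
          Z ((m - l) + l) a (tmul (iterInt X (m - l) a b) (iterInt X l b c)) :=
    reindexQ Q (fun l1 l => Z (l1 + l) a (tmul (iterInt X l1 a b) (iterInt X l b c)))
  rw [conv1, conv2, ← Finset.sum_add_distrib]
  refine Finset.sum_congr rfl (fun m hm => ?_)
  rw [T1 hX a b c m, map_add]
  congr 1
  rw [map_sum]
  rw [← Finset.sum_attach (Finset.Icc 1 m)
    (fun l => Z ((m - l) + l) a (tmul (iterInt X (m - l) a b) (iterInt X l b c)))]
  exact Finset.sum_congr rfl (fun l _ => Z_tcast Z _ a _)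

lemma E2m (hX : ContDiff ℝ 1 X) (s a b c : ℝ) (m : ℕ) :
    (∑ l ∈ Finset.Icc 1 m,
        Z ((m - l) + l) s (tmul (iterInt X (m - l) s a) (iterInt X l a c)))
      = (∑ l ∈ Finset.Icc 1 m,
          Z ((m - l) + l) s (tmul (iterInt X (m - l) s a) (iterInt X l a b)))
        + ∑ l ∈ Finset.Icc 1 m,
            Z ((m - l) + l) s (tmul (iterInt X (m - l) s b) (iterInt X l b c)) := by
  have conv3 : ∀ (u v w : ℝ),
      (∑ l ∈ Finset.Icc 1 m,
        Z ((m - l) + l) s (tmul (iterInt X (m - l) u v) (iterInt X l v w)))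
      = Z m s (∑ l ∈ (Finset.Icc 1 m).attach,
          tcast (show (m - l.1) + l.1 = m by
              have := l.2; simp only [Finset.mem_Icc] at this; omega)
            (tmul (iterInt X (m - l.1) u v) (iterInt X l.1 v w))) := by
    intro u v w
    rw [map_sum]
    rw [← Finset.sum_attach (Finset.Icc 1 m)
      (fun l => Z ((m - l) + l) s (tmul (iterInt X (m - l) u v) (iterInt X l v w)))]
    exact Finset.sum_congr rfl (fun l _ => (Z_tcast Z _ s _).symm)
  rw [conv3 s a c, conv3 s a b, conv3 s b c, ← map_add]
  exact congrArg (Z m s) (T2 hX s a b c m)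

lemma E2 (hX : ContDiff ℝ 1 X) (s a b c : ℝ) :
    (∑ l ∈ Finset.Icc 1 Q, ∑ l1 ∈ Finset.range (Q - l + 1),
        Z (l + l1) s (tcast (Nat.add_comm l1 l)
          (tmul (iterInt X l1 s a) (iterInt X l a c))))
      = (∑ l ∈ Finset.Icc 1 Q, ∑ l1 ∈ Finset.range (Q - l + 1),
          Z (l + l1) s (tcast (Nat.add_comm l1 l)
            (tmul (iterInt X l1 s a) (iterInt X l a b))))
        + ∑ l ∈ Finset.Icc 1 Q, ∑ l1 ∈ Finset.range (Q - l + 1),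
            Z (l + l1) s (tcast (Nat.add_comm l1 l)
              (tmul (iterInt X l1 s b) (iterInt X l b c))) := by
  have conv : ∀ (u v w : ℝ),
      (∑ l ∈ Finset.Icc 1 Q, ∑ l1 ∈ Finset.range (Q - l + 1),
        Z (l + l1) s (tcast (Nat.add_comm l1 l)
          (tmul (iterInt X l1 u v) (iterInt X l v w))))
      = ∑ m ∈ Finset.Icc 1 Q, ∑ l ∈ Finset.Icc 1 m,
          Z ((m - l) + l) s (tmul (iterInt X (m - l) u v) (iterInt X l v w)) := by
    intro u v w
    rw [Finset.sum_congr rfl (fun l (_ : l ∈ Finset.Icc 1 Q) =>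
      Finset.sum_congr rfl (fun l1 _ => Z_tcast Z (Nat.add_comm l1 l) s
        (tmul (iterInt X l1 u v) (iterInt X l v w))))]
    exact reindexQ Q (fun l1 l => Z (l1 + l) s (tmul (iterInt X l1 u v) (iterInt X l v w)))
  rw [conv s a c, conv s a b, conv s b c, ← Finset.sum_add_distrib]
  exact Finset.sum_congr rfl (fun m _ => E2m Z hX s a b c m)

lemma leftPair_apply {a b c : ℕ} (h : a + b = c)
    (B : Tpow d c →L[ℝ] EuclideanSpace ℝ (Fin e)) (w : Tpow d a) (v : Tpow d b) :
    leftPair h B w v = B (tcast h (tmul w v)) := rfl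

lemma key (hX : ContDiff ℝ 1 X) (s a b c : ℝ) :
    ((∑ l ∈ Finset.Icc 1 Q, (Z l a - ∑ l1 ∈ Finset.range (Q - l + 1),
        leftPair (Nat.add_comm l1 l) (Z (l + l1) s) (iterInt X l1 s a))
        (iterInt X l a b))
      + ∑ l ∈ Finset.Icc 1 Q, (Z l b - ∑ l1 ∈ Finset.range (Q - l + 1),
          leftPair (Nat.add_comm l1 l) (Z (l + l1) s) (iterInt X l1 s b))
          (iterInt X l b c))
      - ∑ l ∈ Finset.Icc 1 Q, (Z l a - ∑ l1 ∈ Finset.range (Q - l + 1),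
          leftPair (Nat.add_comm l1 l) (Z (l + l1) s) (iterInt X l1 s a))
          (iterInt X l a c)
    = ∑ l ∈ Finset.Icc 1 Q, (Z l b - ∑ l1 ∈ Finset.range (Q - l + 1),
        leftPair (Nat.add_comm l1 l) (Z (l + l1) a) (iterInt X l1 a b))
        (iterInt X l b c) := by
  have unf : ∀ (r p u v : ℝ),
      (∑ l ∈ Finset.Icc 1 Q, (Z l u - ∑ l1 ∈ Finset.range (Q - l + 1),
          leftPair (Nat.add_comm l1 l) (Z (l + l1) r) (iterInt X l1 p u))
          (iterInt X l u v))
      = (∑ l ∈ Finset.Icc 1 Q, Z l u (iterInt X l u v))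
        - ∑ l ∈ Finset.Icc 1 Q, ∑ l1 ∈ Finset.range (Q - l + 1),
            Z (l + l1) r (tcast (Nat.add_comm l1 l)
              (tmul (iterInt X l1 p u) (iterInt X l u v))) := by
    intro r p u v
    rw [← Finset.sum_sub_distrib]
    refine Finset.sum_congr rfl (fun l _ => ?_)
    rw [ContinuousLinearMap.sub_apply, ContinuousLinearMap.sum_apply]
    congr 1
  rw [unf s s a b, unf s s b c, unf s s a c, unf a a b c]
  rw [E1 Z Q hX a b c, E2 Z Q hX s a b c]
  abel

lemma gammaDiff {M : Type*} [AddCommGroup M] (g : ℝ → ℝ → M) (τ : ℕ → ℝ)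
    (n j : ℕ) (hn : 2 ≤ n) (hj1 : 1 ≤ j) (hjn : j ≤ n - 1) :
    ((∑ i ∈ Finset.range n, g (τ i) (τ (i+1)))
      - ∑ i ∈ Finset.range (n-1),
          g ((fun i => if i < j then τ i else τ (i+1)) i)
            ((fun i => if i < j then τ i else τ (i+1)) (i+1)))
    = g (τ (j-1)) (τ j) + g (τ j) (τ (j+1)) - g (τ (j-1)) (τ (j+1)) := by
  set σ : ℕ → ℝ := fun i => if i < j then τ i else τ (i+1) with hσ
  set F : ℕ → M := fun i => g (τ i) (τ (i+1)) with hF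
  set G : ℕ → M := fun i => g (σ i) (σ (i+1)) with hG
  have split1 : (∑ i ∈ Finset.range n, F i)
      = ((∑ i ∈ Finset.Ico 0 (j-1), F i) + (F (j-1) + F j))
        + ∑ i ∈ Finset.Ico (j+1) n, F i := by
    rw [Finset.range_eq_Ico,
      ← Finset.sum_Ico_consecutive F (Nat.zero_le (j-1)) (show j-1 ≤ n by omega),
      ← Finset.sum_Ico_consecutive F (show j-1 ≤ j+1 by omega) (show j+1 ≤ n by omega)]
    have h2 : (∑ i ∈ Finset.Ico (j-1) (j+1), F i) = F (j-1) + F j := by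
      rw [Finset.sum_Ico_succ_top (show j-1 ≤ j by omega)]
      congr 1
      rw [show Finset.Ico (j-1) j = {j-1} by
        rw [show j = (j-1)+1 by omega]; exact Nat.Ico_succ_singleton (j-1)]
      exact Finset.sum_singleton F (j-1)
    rw [h2]
    abel
  have split2 : (∑ i ∈ Finset.range (n-1), G i)
      = ((∑ i ∈ Finset.Ico 0 (j-1), G i) + G (j-1)) + ∑ i ∈ Finset.Ico j (n-1), G i := by
    rw [Finset.range_eq_Ico,
      ← Finset.sum_Ico_consecutive G (Nat.zero_le (j-1)) (show j-1 ≤ n-1 by omega),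
      ← Finset.sum_Ico_consecutive G (show j-1 ≤ j by omega) (show j ≤ n-1 by omega)]
    have h2 : (∑ i ∈ Finset.Ico (j-1) j, G i) = G (j-1) := by
      rw [show Finset.Ico (j-1) j = {j-1} by
        rw [show j = (j-1)+1 by omega]; exact Nat.Ico_succ_singleton (j-1)]
      exact Finset.sum_singleton G (j-1)
    rw [h2]
    abel
  have hB1 : (∑ i ∈ Finset.Ico 0 (j-1), G i) = ∑ i ∈ Finset.Ico 0 (j-1), F i := by
    refine Finset.sum_congr rfl (fun i hi => ?_)
    simp only [Finset.mem_Ico] at hi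
    have c1 : i < j := by omega
    have c2 : i + 1 < j := by omega
    simp only [hG, hσ, hF, if_pos c1, if_pos c2]
  have hB2 : G (j-1) = g (τ (j-1)) (τ (j+1)) := by
    have c1 : j - 1 < j := by omega
    have c2 : ¬ (j - 1 + 1 < j) := by omega
    have c3 : j - 1 + 1 + 1 = j + 1 := by omega
    simp only [hG, hσ, if_pos c1, if_neg c2, c3]
  have hB3 : (∑ i ∈ Finset.Ico j (n-1), G i) = ∑ i ∈ Finset.Ico (j+1) n, F i := by
    rw [Finset.sum_Ico_eq_sum_range, Finset.sum_Ico_eq_sum_range]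
    rw [show n - 1 - j = n - (j+1) by omega]
    refine Finset.sum_congr rfl (fun i hi => ?_)
    have c1 : ¬ (j + i < j) := by omega
    have c2 : ¬ (j + i + 1 < j) := by omega
    simp only [hG, hσ, hF, if_neg c1, if_neg c2]
    exact congrArg₂ g (congrArg τ (by omega)) (congrArg τ (by omega))
  have hF1 : F (j-1) = g (τ (j-1)) (τ j) := by
    simp only [hF]
    rw [show j - 1 + 1 = j by omega]
  have hF2 : F j = g (τ j) (τ (j+1)) := by simp only [hF]
  rw [split1, split2, hB1, hB2, hB3, hF1, hF2]
  abel

end RSPR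

/-- Removing the interior point `t_j` from the partition
`s = t₀ < ⋯ < t_n = t` (`n ≥ 2`, `1 ≤ j ≤ n−1`) changes the Riemann-sum functional by
`Γ(P) − Γ(P∖{t_j})
 = Σ_{l=1}^{Q} (Z^{(l)}_{t_j} − Σ_{l₁=0}^{Q−l} Z^{(l+l₁)}_{t_{j−1}}(X^{l₁}_{t_{j−1},t_j} ⊗ ·))
     (X^{l}_{t_j,t_{j+1}})`. -/
theorem riemann_sum_point_removal {d e : ℕ} (T : ℝ)
    (X : ℝ → EuclideanSpace ℝ (Fin d)) (hX : ContDiff ℝ 1 X)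
    (Q : ℕ) (hQ : 1 ≤ Q)
    (Z : (l : ℕ) → ℝ → (Tpow d l →L[ℝ] EuclideanSpace ℝ (Fin e)))
    (s t : ℝ) (hs : 0 ≤ s) (hst : s ≤ t) (htT : t ≤ T)
    (n : ℕ) (hn : 2 ≤ n) (τ : ℕ → ℝ)
    (hτ0 : τ 0 = s) (hτn : τ n = t) (hmono : ∀ i, i < n → τ i < τ (i + 1))
    (j : ℕ) (hj1 : 1 ≤ j) (hjn : j ≤ n - 1) :
    riemannGamma X Q Z s n τ
        - riemannGamma X Q Z s (n - 1) (fun i => if i < j then τ i else τ (i + 1))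
      = ∑ l ∈ Finset.Icc 1 Q,
          (Z l (τ j) - ∑ l₁ ∈ Finset.range (Q - l + 1),
              leftPair (Nat.add_comm l₁ l) (Z (l + l₁) (τ (j - 1)))
                (iterInt X l₁ (τ (j - 1)) (τ j)))
            (iterInt X l (τ j) (τ (j + 1))) := by
  have hG := RSPR.gammaDiff (M := EuclideanSpace ℝ (Fin e))
    (fun u v => ∑ l ∈ Finset.Icc 1 Q, (Z l u - ∑ l1 ∈ Finset.range (Q - l + 1),
      leftPair (Nat.add_comm l1 l) (Z (l + l1) s) (iterInt X l1 s u)) (iterInt X l u v))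
    τ n j hn hj1 hjn
  have hK := RSPR.key Z Q hX s (τ (j-1)) (τ j) (τ (j+1))
  exact hG.trans hK

end
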